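/- Let h = i/√2, so that h³ = −i/(2√2). Then Re Li₂(h³) − 6·Re Li₂(h) = π²/12 − (3/8) log²2. -/

import Mathlib

open Complex

/-- The polylogarithm `Li n z = ∑_{k ≥ 1} z^k / k^n`. -/
noncomputable def Li (n : ℕ) (z : ℂ) : ℂ := ∑' k : ℕ, z ^ (k + 1) / ((k + 1 : ℕ) : ℂ) ^ n

/-- Real dilogarithm. -/
noncomputable def L2 (x : ℝ) : ℝ := ∑' k : ℕ, x ^ (k + 1) / ((k + 1 : ℕ) : ℝ) ^ 2

lemma summable_inv_sq : Summable (fun k : ℕ => (1 : ℝ) / ((k + 1 : ℕ) : ℝ) ^ 2) := by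
  have := Real.summable_one_div_nat_pow.mpr (le_refl 2)
  have h := this.comp_injective (add_left_injective 1)
  simpa [Function.comp_def, one_div] using h

lemma L2_term_bound {x : ℝ} (hx : |x| ≤ 1) (k : ℕ) :
    ‖x ^ (k + 1) / ((k + 1 : ℕ) : ℝ) ^ 2‖ ≤ 1 / ((k + 1 : ℕ) : ℝ) ^ 2 := by
  have h1 : |x| ^ (k+1) ≤ 1 := pow_le_one₀ (abs_nonneg x) hx
  have h2 : (0:ℝ) < ((k + 1 : ℕ) : ℝ) ^ 2 := by positivity
  rw [Real.norm_eq_abs, abs_div, _root_.abs_pow, abs_of_pos h2]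
  exact div_le_div_of_nonneg_right h1 h2.le

lemma L2_summable {x : ℝ} (hx : |x| ≤ 1) :
    Summable (fun k : ℕ => x ^ (k + 1) / ((k + 1 : ℕ) : ℝ) ^ 2) :=
  Summable.of_norm_bounded summable_inv_sq (L2_term_bound hx)

lemma L2_continuousOn : ContinuousOn L2 (Set.Icc (-1 : ℝ) 1) := by
  apply continuousOn_tsum (u := fun k : ℕ => (1 : ℝ) / ((k + 1 : ℕ) : ℝ) ^ 2)
  · intro i; fun_prop
  · exact summable_inv_sq
  · intro n x hx
    exact L2_term_bound (abs_le.mpr ⟨hx.1, hx.2⟩) n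

lemma L2_zero : L2 0 = 0 := by
  simp [L2]

noncomputable def Gd (x : ℝ) : ℝ := ∑' k : ℕ, x ^ k / ((k + 1 : ℕ) : ℝ)

lemma Gd_summable {x : ℝ} (hx : |x| < 1) :
    Summable (fun k : ℕ => x ^ k / ((k + 1 : ℕ) : ℝ)) := by
  apply Summable.of_norm_bounded (summable_geometric_of_lt_one (abs_nonneg x) hx)
  intro k
  have h2 : (1:ℝ) ≤ ((k + 1 : ℕ) : ℝ) := by exact_mod_cast Nat.one_le_iff_ne_zero.mpr (Nat.succ_ne_zero k)
  rw [Real.norm_eq_abs, abs_div, _root_.abs_pow, abs_of_pos (by linarith : (0:ℝ) < ((k+1:ℕ):ℝ))]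
  calc |x| ^ k / ((k + 1 : ℕ) : ℝ) ≤ |x| ^ k / 1 :=
        div_le_div_of_nonneg_left (by positivity) one_pos h2
    _ = |x| ^ k := div_one _

lemma Gd_zero : Gd 0 = 1 := by
  rw [Gd, tsum_eq_single 0 (by intro k hk; simp [zero_pow hk])]
  simp

lemma mul_Gd {x : ℝ} (hx : |x| < 1) : x * Gd x = -Real.log (1 - x) := by
  have h1 := Real.hasSum_pow_div_log_of_abs_lt_one hx
  have h2 := ((Gd_summable hx).hasSum).mul_left x
  have : HasSum (fun k : ℕ => x ^ (k + 1) / ((k + 1 : ℕ) : ℝ)) (x * Gd x) := by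
    refine h2.congr_fun fun k => ?_
    push_cast
    ring
  exact this.unique (by exact_mod_cast h1)

lemma hasDerivAt_L2 {x : ℝ} (hx : |x| < 1) : HasDerivAt L2 (Gd x) x := by
  set r : ℝ := (|x| + 1) / 2 with hr
  have hr0 : 0 ≤ r := by positivity
  have hr1 : r < 1 := by rw [hr]; linarith
  have hxr : |x| < r := by rw [hr]; linarith
  have hmem : x ∈ Set.Ioo (-r) r := abs_lt.mp hxr
  have key : HasDerivAt (fun z => ∑' k : ℕ, z ^ (k + 1) / ((k + 1 : ℕ) : ℝ) ^ 2)
      (∑' k : ℕ, x ^ k / ((k + 1 : ℕ) : ℝ)) x := by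
    apply hasDerivAt_tsum_of_isPreconnected (u := fun k : ℕ => r ^ k)
      (g' := fun k y => y ^ k / ((k + 1 : ℕ) : ℝ))
      (summable_geometric_of_lt_one hr0 hr1) isOpen_Ioo (isPreconnected_Ioo)
      ?_ ?_ (show (0:ℝ) ∈ Set.Ioo (-r) r by constructor <;> nlinarith [abs_nonneg x]) ?_ hmem
    · intro k y _
      have h := (hasDerivAt_pow (k+1) y).div_const (((k + 1 : ℕ) : ℝ) ^ 2)
      refine h.congr_deriv ?_
      have hk : ((k + 1 : ℕ) : ℝ) ≠ 0 := by positivity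
      field_simp
      push_cast
      ring
    · intro k y hy
      have hy1 : |y| ≤ r := le_of_lt (abs_lt.mpr ⟨hy.1, hy.2⟩)
      have h2 : (1:ℝ) ≤ ((k + 1 : ℕ) : ℝ) := by exact_mod_cast Nat.one_le_iff_ne_zero.mpr (Nat.succ_ne_zero k)
      rw [Real.norm_eq_abs, abs_div, _root_.abs_pow, abs_of_pos (by linarith : (0:ℝ) < ((k+1:ℕ):ℝ))]
      calc |y| ^ k / ((k + 1 : ℕ) : ℝ) ≤ |y| ^ k / 1 :=
            div_le_div_of_nonneg_left (by positivity) one_pos h2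
        _ = |y| ^ k := div_one _
        _ ≤ r ^ k := pow_le_pow_left₀ (abs_nonneg y) hy1 k
    · exact L2_summable (x := 0) (by norm_num)
  exact key

/-- The Landen-type function. -/
noncomputable def Fl (z : ℝ) : ℝ := L2 z + L2 (z / (z - 1)) + (1 / 2) * Real.log (1 - z) ^ 2

lemma w_mem {z : ℝ} (hz : z ∈ Set.Ioo (-1 : ℝ) (1/2)) :
    z / (z - 1) ∈ Set.Ioo (-1 : ℝ) (1/2) := by
  obtain ⟨h1, h2⟩ := hz
  have hd : z - 1 < 0 := by linarith
  constructor
  · rw [lt_div_iff_of_neg hd]; linarith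
  · rw [div_lt_iff_of_neg hd]; linarith

lemma hasDerivAt_Fl {z : ℝ} (hz : z ∈ Set.Ioo (-1 : ℝ) (1/2)) : HasDerivAt Fl 0 z := by
  obtain ⟨h1, h2⟩ := hz
  have hzlt : |z| < 1 := abs_lt.mpr ⟨h1, by linarith⟩
  have hd : z - 1 < 0 := by linarith
  have hdne : z - 1 ≠ 0 := ne_of_lt hd
  have hw := w_mem ⟨h1, h2⟩
  have hwlt : |z / (z - 1)| < 1 := abs_lt.mpr ⟨hw.1, by linarith [hw.2]⟩
  set w := z / (z - 1) with hwdef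
  -- derivative of z ↦ z/(z-1)
  have hquot : HasDerivAt (fun z : ℝ => z / (z - 1)) (-1 / (z - 1) ^ 2) z := by
    have := (hasDerivAt_id z).div ((hasDerivAt_id z).sub_const 1) hdne
    refine this.congr_deriv ?_
    simp only [id_eq]
    ring
  have hA : HasDerivAt (fun z : ℝ => L2 (z / (z - 1))) (Gd w * (-1 / (z - 1) ^ 2)) z :=
    by
      have := hasDerivAt_L2 hwlt
      have h2 := HasDerivAt.comp (𝕜 := ℝ) z this hquot
      exact h2
  have hlog : HasDerivAt (fun z : ℝ => Real.log (1 - z)) (-(1 - z)⁻¹) z := by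
    have h1z : (1 : ℝ) - z ≠ 0 := by linarith
    have := (Real.hasDerivAt_log h1z).comp z ((hasDerivAt_const z (1:ℝ)).sub (hasDerivAt_id z))
    refine this.congr_deriv ?_
    simp
  have hB : HasDerivAt (fun z : ℝ => (1/2 : ℝ) * Real.log (1 - z) ^ 2)
      ((1/2 : ℝ) * (2 * Real.log (1 - z) * (-(1 - z)⁻¹))) z := by
    exact ((hlog.pow 2).const_mul (1/2 : ℝ)).congr_deriv (by ring)
  have htot := ((hasDerivAt_L2 hzlt).add hA).add hB
  refine htot.congr_deriv ?_
  symm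
  -- show the total derivative is 0
  have hGz : z * Gd z = -Real.log (1 - z) := mul_Gd hzlt
  have h1z : (0:ℝ) < 1 - z := by linarith
  have hGw : w * Gd w = Real.log (1 - z) := by
    have hmg := mul_Gd hwlt
    have hweq : 1 - w = (1 - z)⁻¹ := by
      rw [hwdef]
      field_simp
      ring
    rw [hmg, hweq, Real.log_inv]
    ring
  rcases eq_or_ne z 0 with rfl | hz0
  · have hw0 : w = 0 := by rw [hwdef]; norm_num
    rw [hw0]
    norm_num [Gd_zero]
  · have hwne : w ≠ 0 := div_ne_zero hz0 hdne
    have e1 : Gd z = -Real.log (1 - z) / z := by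
      rw [eq_div_iff hz0]; linarith [hGz]
    have e2 : Gd w = Real.log (1 - z) / w := by
      rw [eq_div_iff hwne]; linarith [hGw]
    rw [e1, e2, hwdef]
    have h1zne : (1:ℝ) - z ≠ 0 := ne_of_gt h1z
    field_simp
    ring

lemma Fl_zero : Fl 0 = 0 := by
  simp [Fl, L2_zero]

lemma landen {z : ℝ} (hz : z ∈ Set.Ioo (-1 : ℝ) (1/2)) :
    L2 z + L2 (z / (z - 1)) = -(1/2) * Real.log (1 - z) ^ 2 := by
  have hconst : Fl z = Fl 0 := by
    rcases le_or_gt 0 z with h | h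
    · have := constant_of_has_deriv_right_zero (f := Fl) (a := 0) (b := z)
        (fun x hx => (hasDerivAt_Fl ⟨by linarith [hx.1], lt_of_le_of_lt hx.2 hz.2⟩).continuousAt.continuousWithinAt)
        (fun x hx => ((hasDerivAt_Fl ⟨by linarith [hx.1], lt_of_lt_of_le hx.2 (le_of_lt hz.2)⟩)).hasDerivWithinAt)
      exact this z (Set.right_mem_Icc.mpr h)
    · have := constant_of_has_deriv_right_zero (f := Fl) (a := z) (b := 0)
        (fun x hx => (hasDerivAt_Fl ⟨lt_of_lt_of_le hz.1 hx.1, lt_of_le_of_lt hx.2 (by norm_num)⟩).continuousAt.continuousWithinAt)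
        (fun x hx => ((hasDerivAt_Fl ⟨lt_of_lt_of_le hz.1 hx.1, lt_of_lt_of_le hx.2 (by norm_num)⟩)).hasDerivWithinAt)
      exact (this 0 (Set.right_mem_Icc.mpr (le_of_lt h))).symm
  have := hconst.trans Fl_zero
  rw [Fl] at this
  linarith

lemma inj2 : Function.Injective (fun m : ℕ => 2 * m) := by
  intro a b h; dsimp at h; omega
lemma inj21 : Function.Injective (fun m : ℕ => 2 * m + 1) := by
  intro a b h; dsimp at h; omega

lemma zeta2_hasSum : HasSum (fun k : ℕ => (1:ℝ) / ((k + 1 : ℕ) : ℝ) ^ 2) (Real.pi ^ 2 / 6) := by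
  have h := hasSum_zeta_two
  have h2 : HasSum (fun n : ℕ => (1:ℝ)/(((n+1:ℕ)):ℝ)^2) (Real.pi^2/6) := by
    rw [hasSum_nat_add_iff (f := fun n : ℕ => (1:ℝ)/(n:ℝ)^2) 1]
    simpa using h
  exact h2

lemma L2_neg_one : L2 (-1) = -(Real.pi ^ 2 / 12) := by
  set g : ℕ → ℝ := fun k => (1:ℝ)/((k+1:ℕ):ℝ)^2 with hgdef
  have hg : Summable g := summable_inv_sq
  have hgt : ∑' k, g k = Real.pi ^ 2 / 6 := zeta2_hasSum.tsum_eq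
  have hodd : ∀ m : ℕ, g (2*m+1) = (1/4) * g m := by
    intro m
    simp only [hgdef]
    have hcast : ((2*m+1+1:ℕ):ℝ) = 2 * ((m+1:ℕ):ℝ) := by push_cast; ring
    have hc : ((m+1:ℕ):ℝ) ≠ 0 := by positivity
    rw [hcast]
    field_simp
    ring
  have hSo : (∑' m, g (2*m+1)) = Real.pi^2/24 := by
    rw [tsum_congr hodd, tsum_mul_left, hgt]
    ring
  have hsplit := tsum_even_add_odd (hg.comp_injective inj2) (hg.comp_injective inj21)
  have hSe : (∑' m, g (2*m)) = Real.pi^2/8 := by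
    rw [hgt, hSo] at hsplit
    linarith
  -- now the alternating series
  set f : ℕ → ℝ := fun k => (-1:ℝ)^(k+1)/((k+1:ℕ):ℝ)^2 with hfdef
  have hf : Summable f := L2_summable (x := -1) (by norm_num)
  have hL : L2 (-1) = ∑' k, f k := rfl
  have hfe : ∀ m : ℕ, f (2*m) = -(g (2*m)) := by
    intro m
    simp only [hfdef, hgdef]
    rw [Odd.neg_one_pow ⟨m, by ring⟩]
    ring
  have hfo : ∀ m : ℕ, f (2*m+1) = g (2*m+1) := by
    intro m
    simp only [hfdef, hgdef]
    rw [Even.neg_one_pow ⟨m+1, by ring⟩]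
  have hfsplit := tsum_even_add_odd (hf.comp_injective inj2) (hf.comp_injective inj21)
  rw [hL, ← hfsplit, tsum_congr hfe, tsum_congr hfo, tsum_neg, hSe, hSo]
  ring

lemma landen_half : L2 (1/2 : ℝ) + L2 (-1) = -(1/2) * Real.log 2 ^ 2 := by
  set Φ : ℝ → ℝ := fun z => L2 z + L2 (z/(z-1)) + (1/2) * Real.log (1-z)^2 with hΦ
  have hsub : Set.Icc (0:ℝ) (1/2) ⊆ Set.Icc (-1:ℝ) 1 := by
    intro x hx; exact ⟨by linarith [hx.1], by linarith [hx.2]⟩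
  have hmapsto : ∀ x ∈ Set.Icc (0:ℝ) (1/2), x/(x-1) ∈ Set.Icc (-1:ℝ) 1 := by
    intro x hx
    have hd : x - 1 < 0 := by linarith [hx.2]
    constructor
    · rw [le_div_iff_of_neg hd]; linarith [hx.2]
    · rw [div_le_iff_of_neg hd]; nlinarith [hx.1, hx.2]
  have hcont : ContinuousOn Φ (Set.Icc 0 (1/2)) := by
    apply ContinuousOn.add
    apply ContinuousOn.add
    · exact L2_continuousOn.mono hsub
    · apply (L2_continuousOn.comp (t := Set.Icc (-1:ℝ) 1) ?_ hmapsto)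
      apply ContinuousOn.div continuousOn_id (by fun_prop)
      intro x hx
      have : x - 1 < 0 := by linarith [hx.2]
      exact ne_of_lt this
    · apply ContinuousOn.mul continuousOn_const
      apply ContinuousOn.pow
      apply ContinuousOn.log (by fun_prop)
      intro x hx
      have : (0:ℝ) < 1 - x := by linarith [hx.2]
      exact ne_of_gt this
  have heq : ∀ x ∈ Set.Ico (0:ℝ) (1/2), Φ x = 0 := by
    intro x hx
    have := landen ⟨by linarith [hx.1], hx.2⟩
    simp only [hΦ]
    linarith
  have hmem : (1/2 : ℝ) ∈ Set.Icc (0:ℝ) (1/2) := by norm_num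
  have hne : (nhdsWithin (1/2 : ℝ) (Set.Ico (0:ℝ) (1/2))).NeBot := by
    rw [← mem_closure_iff_nhdsWithin_neBot, closure_Ico (by norm_num : (0:ℝ) ≠ 1/2)]
    constructor <;> norm_num
  have h1 : Filter.Tendsto Φ (nhdsWithin (1/2 : ℝ) (Set.Ico (0:ℝ) (1/2))) (nhds (Φ (1/2))) :=
    (hcont (1/2) hmem).mono Set.Ico_subset_Icc_self
  have h2 : Filter.Tendsto Φ (nhdsWithin (1/2 : ℝ) (Set.Ico (0:ℝ) (1/2))) (nhds 0) := by
    refine Filter.Tendsto.congr' ?_ tendsto_const_nhds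
    filter_upwards [self_mem_nhdsWithin] with x hx
    exact (heq x hx).symm
  have hval : Φ (1/2) = 0 := tendsto_nhds_unique h1 h2
  have e1 : (1/2 : ℝ)/((1/2:ℝ)-1) = -1 := by norm_num
  have e2 : Real.log (1 - 1/2 : ℝ) = -Real.log 2 := by
    rw [show (1:ℝ) - 1/2 = (2:ℝ)⁻¹ by norm_num, Real.log_inv]
  simp only [hΦ] at hval
  rw [e1, e2, neg_sq] at hval
  linarith

lemma L2_half : L2 (1/2 : ℝ) = Real.pi^2/12 - Real.log 2^2/2 := by
  have := landen_half
  rw [L2_neg_one] at this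
  linarith

lemma duplication {x : ℝ} (hx : |x| ≤ 1) : L2 (x^2) = 2 * L2 x + 2 * L2 (-x) := by
  have hxn : |(-x)| ≤ 1 := by rwa [abs_neg]
  set F : ℕ → ℝ := fun k => (x^(k+1) + (-x)^(k+1)) / ((k+1:ℕ):ℝ)^2 with hF
  have hFs : Summable F :=
    ((L2_summable hx).add (L2_summable hxn)).congr (fun k => by rw [← add_div])
  have hsum : L2 x + L2 (-x) = ∑' k, F k := by
    rw [L2, L2, ← Summable.tsum_add (L2_summable hx) (L2_summable hxn)]
    exact tsum_congr fun k => by rw [← add_div]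
  have hev : ∀ m : ℕ, F (2*m) = 0 := by
    intro m
    simp only [hF]
    rw [Odd.neg_pow ⟨m, by ring⟩]
    simp
  have hodd : ∀ m : ℕ, F (2*m+1) = (1/2) * ((x^2)^(m+1) / ((m+1:ℕ):ℝ)^2) := by
    intro m
    simp only [hF]
    rw [Even.neg_pow ⟨m+1, by ring⟩]
    have hpow : x ^ (2*m+1+1) = (x^2)^(m+1) := by
      rw [show 2*m+1+1 = 2*(m+1) by ring, pow_mul]
    have hcast : ((2*m+1+1:ℕ):ℝ) = 2 * ((m+1:ℕ):ℝ) := by push_cast; ring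
    have hc : ((m+1:ℕ):ℝ) ≠ 0 := by positivity
    rw [hpow, hcast]
    field_simp
    ring
  have hsplit := tsum_even_add_odd (hFs.comp_injective inj2) (hFs.comp_injective inj21)
  have hO : (∑' m, F (2*m+1)) = (1/2) * L2 (x^2) := by
    rw [tsum_congr hodd, tsum_mul_left, L2]
  have hE : (∑' m, F (2*m)) = 0 := by
    rw [tsum_congr hev, tsum_zero]
  rw [hE, hO] at hsplit
  rw [← hsplit] at hsum
  linarith

lemma L2_key : L2 (-(1/8) : ℝ) - 6 * L2 (-(1/2) : ℝ) = Real.pi^2/3 - (3/2) * Real.log 2^2 := by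
  have a3 := landen (z := 1/3) (by norm_num)
  have a9 := landen (z := 1/9) (by norm_num)
  have am3 := landen (z := -(1/3)) (by norm_num)
  have d3 := duplication (x := 1/3) (abs_le.mpr (by norm_num))
  have d2 := duplication (x := 1/2) (abs_le.mpr (by norm_num))
  have hhalf := L2_half
  norm_num at a3 a9 am3 d3 d2
  have l23 : Real.log ((2:ℝ)/3) = Real.log 2 - Real.log 3 := Real.log_div (by norm_num) (by norm_num)
  have l89 : Real.log ((8:ℝ)/9) = 3 * Real.log 2 - 2 * Real.log 3 := by
    rw [Real.log_div (by norm_num) (by norm_num),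
      show (8:ℝ) = 2^3 by norm_num, show (9:ℝ) = 3^2 by norm_num,
      Real.log_pow, Real.log_pow]
    push_cast
    ring
  have l43 : Real.log ((4:ℝ)/3) = 2 * Real.log 2 - Real.log 3 := by
    rw [Real.log_div (by norm_num) (by norm_num), show (4:ℝ) = 2^2 by norm_num, Real.log_pow]
    push_cast
    ring
  rw [l23] at a3
  rw [l89] at a9
  rw [l43] at am3
  linear_combination a9 - d3 - 2*a3 - 2*am3 + 2*d2 + 4*hhalf

lemma re_Li {t : ℝ} (ht : |t| ≤ 1) : (Li 2 (I * (t:ℂ))).re = L2 (-(t^2)) / 4 := by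
  set z : ℂ := I * (t:ℂ) with hzdef
  have hz : ‖z‖ ≤ 1 := by
    rw [hzdef, norm_mul, Complex.norm_I, one_mul, Complex.norm_real, Real.norm_eq_abs]
    exact ht
  have hnorm : ∀ k : ℕ, ‖z^(k+1)/((k+1:ℕ):ℂ)^2‖ ≤ 1 / ((k+1:ℕ):ℝ)^2 := by
    intro k
    rw [norm_div, norm_pow, norm_pow, Complex.norm_natCast]
    exact div_le_div_of_nonneg_right (pow_le_one₀ (norm_nonneg z) hz) (by positivity : (0:ℝ) < ((k+1:ℕ):ℝ)^2).le
  have hsummC : Summable (fun k : ℕ => z^(k+1)/((k+1:ℕ):ℂ)^2) :=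
    Summable.of_norm_bounded summable_inv_sq hnorm
  have hre : (Li 2 z).re = ∑' k : ℕ, (z^(k+1)/((k+1:ℕ):ℂ)^2).re := by
    rw [Li]
    exact Complex.reCLM.map_tsum hsummC
  set r : ℕ → ℝ := fun k => (z^(k+1)/((k+1:ℕ):ℂ)^2).re with hrdef
  have hrs : Summable r := by
    apply Summable.of_norm_bounded summable_inv_sq
    intro k
    rw [hrdef, Real.norm_eq_abs]
    exact (Complex.abs_re_le_norm _).trans (hnorm k)
  have hzpow : ∀ n : ℕ, z ^ n = I ^ n * ((t^n : ℝ) : ℂ) := by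
    intro n
    rw [hzdef, mul_pow, Complex.ofReal_pow]
  have hev : ∀ m : ℕ, r (2*m) = 0 := by
    intro m
    simp only [hrdef]
    have hznum : z ^ (2*m+1) = ((((-1:ℝ))^m * t^(2*m+1) : ℝ) : ℂ) * I := by
      rw [hzpow (2*m+1), pow_succ, pow_mul, Complex.I_sq]
      push_cast
      ring
    rw [hznum]
    generalize ((-1:ℝ)^m * t^(2*m+1)) = a
    simp [Complex.div_re]
    left; right
    simp [sq, Complex.mul_im]
  have hodd : ∀ m : ℕ, r (2*m+1) = (1/4) * ((-(t^2))^(m+1) / ((m+1:ℕ):ℝ)^2) := by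
    intro m
    simp only [hrdef]
    have hIpow : (I:ℂ) ^ (2*m+1+1) = ((-1:ℂ))^(m+1) := by
      rw [show 2*m+1+1 = 2*(m+1) by ring, pow_mul, Complex.I_sq]
    rw [hzpow (2*m+1+1), hIpow]
    rw [show ((-1:ℂ))^(m+1) * ((t^(2*m+1+1) : ℝ) : ℂ)
        = ((((-1:ℝ))^(m+1) * t^(2*m+1+1) : ℝ) : ℂ) by push_cast; ring]
    rw [show ((2*m+1+1:ℕ):ℂ)^2 = ((((2*m+1+1:ℕ):ℝ)^2 : ℝ) : ℂ) by push_cast; ring]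
    rw [Complex.div_ofReal_re, Complex.ofReal_re]
    have hnum : ((-1:ℝ))^(m+1) * t^(2*m+1+1) = (-(t^2))^(m+1) := by
      rw [show 2*m+1+1 = 2*(m+1) by ring, pow_mul, neg_pow]
      ring
    have hcast : ((2*m+1+1:ℕ):ℝ) = 2 * ((m+1:ℕ):ℝ) := by push_cast; ring
    have hc : ((m+1:ℕ):ℝ) ≠ 0 := by positivity
    rw [hnum, hcast]
    rw [mul_pow, show ((2:ℝ))^2 = 4 by norm_num]
    ring
  have hsplit := tsum_even_add_odd (hrs.comp_injective inj2) (hrs.comp_injective inj21)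
  have hE : (∑' m, r (2*m)) = 0 := by rw [tsum_congr hev, tsum_zero]
  have hO : (∑' m, r (2*m+1)) = (1/4) * L2 (-(t^2)) := by
    rw [tsum_congr hodd, tsum_mul_left, L2]
  rw [hre, ← hsplit, hE, hO]
  ring

theorem dilog_ladder_h :
    (Li 2 ((I / (Real.sqrt 2 : ℂ)) ^ 3)).re - 6 * (Li 2 (I / (Real.sqrt 2 : ℂ))).re =
      Real.pi ^ 2 / 12 - (3 / 8) * Real.log 2 ^ 2 := by
  have hsq : Real.sqrt 2 ^ 2 = 2 := Real.sq_sqrt (by norm_num)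
  have hpos : (0:ℝ) < Real.sqrt 2 := Real.sqrt_pos.mpr (by norm_num)
  have hone : (1:ℝ) ≤ Real.sqrt 2 := by nlinarith
  have hinv : (0:ℝ) < (Real.sqrt 2)⁻¹ := by positivity
  have hinvle : (Real.sqrt 2)⁻¹ ≤ 1 := by
    rw [inv_le_one_iff₀]
    right; exact hone
  have h1 : I / (Real.sqrt 2 : ℂ) = I * (((Real.sqrt 2)⁻¹ : ℝ) : ℂ) := by
    rw [div_eq_mul_inv, Complex.ofReal_inv]
  have hI3 : (I:ℂ)^3 = -I := by
    rw [pow_succ, Complex.I_sq]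
    ring
  have h3 : (I / (Real.sqrt 2 : ℂ))^3 = I * (((-((Real.sqrt 2)⁻¹^3)) : ℝ) : ℂ) := by
    rw [h1, mul_pow, hI3]
    push_cast
    ring
  have ht1 : |(Real.sqrt 2)⁻¹| ≤ 1 := by rw [abs_of_pos hinv]; exact hinvle
  have ht2 : |(-((Real.sqrt 2)⁻¹^3))| ≤ 1 := by
    rw [abs_neg, abs_of_pos (by positivity)]
    calc (Real.sqrt 2)⁻¹^3 ≤ 1^3 := pow_le_pow_left₀ hinv.le hinvle 3
      _ = 1 := one_pow 3
  have r1 := re_Li ht1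
  have r2 := re_Li ht2
  have e1 : -(((Real.sqrt 2)⁻¹)^2) = -(1/2 : ℝ) := by
    rw [inv_pow, hsq]
    norm_num
  have e2 : -((-((Real.sqrt 2)⁻¹^3))^2) = -(1/8 : ℝ) := by
    rw [neg_sq, ← pow_mul]
    have h6 : (Real.sqrt 2)⁻¹ ^ (3*2) = ((Real.sqrt 2 ^ 2)⁻¹)^3 := by
      rw [show (3*2:ℕ) = 2*3 by ring, pow_mul, inv_pow]
    rw [h6, hsq]
    norm_num
  rw [e1] at r1
  rw [e2] at r2
  rw [h3, h1, r1, r2]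
  have := L2_key
  linarith
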